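/- arXiv:1004.4619 — 2 statements merged into one kernel-verified Lean document; each statement's English description precedes it below -/
import Mathlib

section
/- Label shuffling: if vertices i and j are neighbours (A_{ij} ≠ 0 in ℤ/d), then the encoded graph state Z^z|G⟩ equals, up to global phase, X_j^{−A_{ij}^{-1} z_i} Z^{z'}|G⟩ where z'_i = 0, z'_j = z_j, and z'_k = z_k − A_{ij}^{−1} A_{jk} z_i for k ≠ i,j. -/
open Matrix Complex

/-- The primitive `d`-th root of unity `ω = exp(2πi/d)`. -/
noncomputable def ω (d : ℕ) : ℂ := Complex.exp (2 * Real.pi * Complex.I / d)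

/-- The `n`-qudit graph state `|G⟩ = Π_{i<j} C_{ij}^{A_{ij}} |0̄⟩^{⊗n}` of an adjacency
matrix `A` over `ℤ/d`, written out in the computational basis: since each controlled-`Z`
power `C_{ij}^{A_{ij}}` is diagonal, the amplitude of `|x⟩` is
`(1/√d)^n · Π_{i<j} ω^{A_{ij} x_i x_j}`. -/
noncomputable def graphVec {n d : ℕ} (A : Fin n → Fin n → ZMod d) :
    (Fin n → ZMod d) → ℂ := fun x =>
  (((Real.sqrt d : ℝ) : ℂ))⁻¹ ^ n *
    ∏ p ∈ Finset.univ.filter (fun p : Fin n × Fin n => p.1 < p.2),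
      ω d ^ ((A p.1 p.2).val * ((x p.1).val * (x p.2).val))

/-- The graph-state stabilizer `K_i = X_i Π_j Z_j^{A_{ij}}` as a matrix on `(ℂ^d)^{⊗n}`:
it first applies the diagonal phase `Π_j Z_j^{A_{ij}}` and then shifts qudit `i` by one. -/
noncomputable def Kop {n d : ℕ} (A : Fin n → Fin n → ZMod d) (i : Fin n) :
    Matrix (Fin n → ZMod d) (Fin n → ZMod d) ℂ :=
  Matrix.of fun x y =>
    if x = Function.update y i (y i + 1)
    then ω d ^ (∑ j, (A i j).val * (y j).val) else 0

/-- The label operator `Z^z = ⊗_i Z_i^{z_i}`, a diagonal matrix with phases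
`Π_i ω^{z_i x_i}`. -/
noncomputable def Zmat {n d : ℕ} (z : Fin n → ZMod d) :
    Matrix (Fin n → ZMod d) (Fin n → ZMod d) ℂ :=
  Matrix.diagonal fun x => ∏ i, ω d ^ ((z i).val * (x i).val)

/-- The shift operator `X^x = ⊗_i X_i^{x_i}`: `X^x |y⟩ = |y + x⟩`. -/
noncomputable def Xmat {n d : ℕ} (x : Fin n → ZMod d) :
    Matrix (Fin n → ZMod d) (Fin n → ZMod d) ℂ :=
  Matrix.of fun a b => if a = b + x then 1 else 0

section helpers
variable {d : ℕ} [NeZero d]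

lemma omega_pow_d : ω d ^ d = 1 := by
  have hd : (d:ℂ) ≠ 0 := Nat.cast_ne_zero.mpr (NeZero.ne d)
  rw [ω, ← Complex.exp_nat_mul,
    show (d:ℂ) * (2 * Real.pi * Complex.I / d) = 2 * Real.pi * Complex.I by field_simp]
  exact Complex.exp_two_pi_mul_I

lemma omega_mod (m : ℕ) : ω d ^ m = ω d ^ (m % d) := by
  conv_lhs => rw [← Nat.div_add_mod m d]
  rw [pow_add, pow_mul, omega_pow_d, one_pow, one_mul]

lemma omega_val_add (a b : ZMod d) : ω d ^ (a + b).val = ω d ^ a.val * ω d ^ b.val := by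
  rw [← pow_add, ZMod.val_add, ← omega_mod]

lemma omega_val_mul (a b : ZMod d) : ω d ^ (a.val * b.val) = ω d ^ (a * b).val := by
  rw [ZMod.val_mul, ← omega_mod]

lemma omega_val_sum {ι : Type*} (s : Finset ι) (f : ι → ZMod d) :
    (∏ k ∈ s, ω d ^ (f k).val) = ω d ^ (∑ k ∈ s, f k).val := by
  induction s using Finset.cons_induction with
  | empty => simp
  | cons a s ha ih => rw [Finset.prod_cons, Finset.sum_cons, omega_val_add, ih]

lemma omega_val_mul3 (a b c : ZMod d) :
    ω d ^ (a.val * (b.val * c.val)) = ω d ^ (a * (b * c)).val := by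
  calc ω d ^ (a.val * (b.val * c.val)) = (ω d ^ (b.val * c.val)) ^ a.val := by
        rw [← pow_mul, mul_comm]
    _ = (ω d ^ (b*c).val) ^ a.val := by rw [omega_val_mul]
    _ = ω d ^ (a.val * (b*c).val) := by rw [← pow_mul, mul_comm]
    _ = ω d ^ (a * (b*c)).val := omega_val_mul _ _

lemma graphVec_eq {n : ℕ} (A : Fin n → Fin n → ZMod d) (x : Fin n → ZMod d) :
    graphVec A x = (((Real.sqrt d : ℝ) : ℂ))⁻¹ ^ n *
      ω d ^ (∑ p ∈ Finset.univ.filter (fun p : Fin n × Fin n => p.1 < p.2),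
        A p.1 p.2 * (x p.1 * x p.2)).val := by
  rw [graphVec, ← omega_val_sum]
  exact congrArg _ (Finset.prod_congr rfl fun p _ => omega_val_mul3 _ _ _)

lemma Zmat_mulVec {n : ℕ} (z : Fin n → ZMod d) (v : (Fin n → ZMod d) → ℂ)
    (x : Fin n → ZMod d) :
    (Zmat z *ᵥ v) x = ω d ^ (∑ k, z k * x k).val * v x := by
  rw [Zmat, Matrix.mulVec_diagonal, ← omega_val_sum]
  exact congrArg (· * v x) (Finset.prod_congr rfl fun k _ => omega_val_mul _ _)

lemma Xmat_mulVec {n : ℕ} (s : Fin n → ZMod d) (v : (Fin n → ZMod d) → ℂ)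
    (a : Fin n → ZMod d) :
    (Xmat s *ᵥ v) a = v (a - s) := by
  unfold Xmat Matrix.mulVec dotProduct
  simp only [Matrix.of_apply]
  rw [Finset.sum_eq_single (a - s)]
  · rw [if_pos (by abel), one_mul]
  · intro b _ hb
    rw [if_neg, zero_mul]
    intro h
    exact hb (by rw [h]; abel)
  · simp

end helpers

/-- label shuffling: if vertices `i` and `j` are neighbours
(`A_{ij} ≠ 0`), then `Z^z|G⟩` equals, up to a global phase (a power of `ω`),
`X_j^{-A_{ij}⁻¹ z_i} Z^{z'}|G⟩` where `z'_i = 0`, `z'_j = z_j`, and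
`z'_k = z_k - A_{ij}⁻¹ A_{jk} z_i` for `k ≠ i, j`. -/
theorem label_shuffling (d n : ℕ) [NeZero d] (hd : d.Prime)
    (A : Fin n → Fin n → ZMod d)
    (hsymm : ∀ i j, A i j = A j i) (hdiag : ∀ i, A i i = 0)
    (z : Fin n → ZMod d) (i j : Fin n) (hij : A i j ≠ 0) :
    ∃ c : ℕ,
      Zmat z *ᵥ graphVec A =
        ω d ^ c •
          ((Xmat (Pi.single j (-((A i j)⁻¹ * z i))) *
              Zmat (fun k => if k = i then 0 else if k = j then z j
                else z k - (A i j)⁻¹ * A j k * z i)) *ᵥ graphVec A) := by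
  haveI : Fact (Nat.Prime d) := ⟨hd⟩
  set b : ZMod d := (A i j)⁻¹ * z i with hb
  have hii : i ≠ j := by rintro rfl; exact hij (hdiag i)
  refine ⟨(-(z j * b)).val, ?_⟩
  funext x
  set z' : Fin n → ZMod d := fun k => if k = i then 0 else if k = j then z j
    else z k - (A i j)⁻¹ * A j k * z i with hz'
  set y : Fin n → ZMod d := x - Pi.single j (-b) with hy
  have hyk : ∀ k, y k = x k + (if k = j then b else 0) := by
    intro k
    by_cases h : k = j
    · subst h; simp [hy, Pi.sub_apply, Pi.single_eq_same, sub_neg_eq_add]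
    · simp [hy, Pi.sub_apply, Pi.single_eq_of_ne h, h]
  -- the ℤ/d sums
  set P := Finset.univ.filter (fun p : Fin n × Fin n => p.1 < p.2) with hP
  set S : ZMod d := ∑ k, z k * x k with hS
  set Q : ZMod d := ∑ p ∈ P, A p.1 p.2 * (x p.1 * x p.2) with hQ
  set S' : ZMod d := ∑ k, z' k * y k with hS'
  set Q' : ZMod d := ∑ p ∈ P, A p.1 p.2 * (y p.1 * y p.2) with hQ'
  set T : ZMod d := ∑ k, A j k * x k with hT
  have hzi : b * A j i = z i := by
    rw [hsymm j i, hb, mul_comm ((A i j)⁻¹ * z i) (A i j), ← mul_assoc,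
      mul_inv_cancel₀ hij, one_mul]
  -- compute S'
  have keyS : S' = S + z j * b - b * T := by
    have h1 : S' = ∑ k, (z k * x k +
        ((if k = i then b * A j i * x i - z i * x i else 0) +
         (if k = j then z j * b + b * A j j * x j else 0) - b * (A j k * x k))) := by
      rw [hS']
      refine Finset.sum_congr rfl fun k _ => ?_
      rw [hyk k]
      by_cases hki : k = i
      · have hkj : k ≠ j := fun h => hii (hki.symm.trans h)
        simp only [hz', if_pos hki, if_neg hkj]
        rw [hki]; ring
      · by_cases hkj : k = j
        · simp only [hz', if_neg hki, if_pos hkj]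
          rw [hkj]; ring
        · simp only [hz', if_neg hki, if_neg hkj]
          rw [hb]; ring
    rw [h1, Finset.sum_add_distrib, Finset.sum_sub_distrib, Finset.sum_add_distrib,
      Finset.sum_ite_eq', Finset.sum_ite_eq', ← Finset.mul_sum, ← hS, ← hT]
    simp only [Finset.mem_univ, if_pos, hdiag j, hzi]
    ring
  -- compute Q'
  have keyQ : Q' = Q + b * T := by
    have h1 : Q' = ∑ p ∈ P, (A p.1 p.2 * (x p.1 * x p.2) +
        ((if p.2 = j then A p.1 p.2 * x p.1 * b else 0) +
         (if p.1 = j then A p.1 p.2 * b * x p.2 else 0))) := by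
      rw [hQ']
      refine Finset.sum_congr rfl fun p hp => ?_
      have hlt : p.1 < p.2 := (Finset.mem_filter.mp hp).2
      rw [hyk p.1, hyk p.2]
      by_cases h1j : p.1 = j <;> by_cases h2j : p.2 = j
      · exact absurd (h1j.trans h2j.symm) (ne_of_lt hlt)
      · simp only [if_pos h1j, if_neg h2j]; ring
      · simp only [if_neg h1j, if_pos h2j]; ring
      · simp only [if_neg h1j, if_neg h2j]; ring
    rw [h1, Finset.sum_add_distrib, Finset.sum_add_distrib, ← hQ]
    have e1 : (∑ p ∈ P, if p.2 = j then A p.1 p.2 * x p.1 * b else 0)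
        = ∑ k, (if k < j then A k j * x k * b else 0) := by
      rw [hP, Finset.sum_filter, Fintype.sum_prod_type]
      refine Finset.sum_congr rfl fun k _ => ?_
      have : ∀ l : Fin n, (if k < l then (if l = j then A k l * x k * b else 0) else 0)
          = (if l = j then (if k < l then A k l * x k * b else 0) else 0) := by
        intro l; split_ifs <;> rfl
      simp only [this, Finset.sum_ite_eq', Finset.mem_univ, if_pos]
    have e2 : (∑ p ∈ P, if p.1 = j then A p.1 p.2 * b * x p.2 else 0)
        = ∑ l, (if j < l then A j l * b * x l else 0) := by
      rw [hP, Finset.sum_filter, Fintype.sum_prod_type]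
      have : ∀ k : Fin n, (∑ l, if k < l then (if k = j then A k l * b * x l else 0) else 0)
          = (if k = j then (∑ l, if k < l then A k l * b * x l else 0) else 0) := by
        intro k
        by_cases hk : k = j
        · simp only [if_pos hk]
        · simp only [if_neg hk, ite_self, Finset.sum_const_zero]
      simp only [this, Finset.sum_ite_eq', Finset.mem_univ, if_pos]
    rw [e1, e2, hT, Finset.mul_sum, ← Finset.sum_add_distrib]
    congr 1
    refine Finset.sum_congr rfl fun k _ => ?_
    rcases lt_trichotomy k j with h | h | h
    · rw [if_pos h, if_neg (asymm h), hsymm k j]; ring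
    · subst h; rw [if_neg (lt_irrefl k), if_neg (lt_irrefl k), hdiag]; ring
    · rw [if_neg (asymm h), if_pos h, hsymm j k]; ring
  -- main amplitude identity
  have key : S + Q = -(z j * b) + ((S' + Q')) := by
    rw [keyS, keyQ]; ring
  -- now the complex computation
  rw [Pi.smul_apply, smul_eq_mul, ← Matrix.mulVec_mulVec, Xmat_mulVec,
    Zmat_mulVec, Zmat_mulVec, ← hy, graphVec_eq, graphVec_eq, ← hP, ← hS, ← hQ,
    ← hS', ← hQ']
  calc ω d ^ S.val * ((((Real.sqrt d : ℝ) : ℂ))⁻¹ ^ n * ω d ^ Q.val)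
      = (((Real.sqrt d : ℝ) : ℂ))⁻¹ ^ n * (ω d ^ S.val * ω d ^ Q.val) := by ring
    _ = (((Real.sqrt d : ℝ) : ℂ))⁻¹ ^ n * ω d ^ (S + Q).val := by rw [omega_val_add]
    _ = (((Real.sqrt d : ℝ) : ℂ))⁻¹ ^ n * ω d ^ (-(z j * b) + (S' + Q')).val := by
        rw [key]
    _ = (((Real.sqrt d : ℝ) : ℂ))⁻¹ ^ n *
          (ω d ^ (-(z j * b)).val * (ω d ^ S'.val * ω d ^ Q'.val)) := by
        rw [omega_val_add, omega_val_add]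
    _ = ω d ^ (-(z j * b)).val *
          (ω d ^ S'.val * ((((Real.sqrt d : ℝ) : ℂ))⁻¹ ^ n * ω d ^ Q'.val)) := by ring
end

section
/- In the (2,3) CC scheme state over ℤ/d, a single player's reduced density matrix is independent of the secret: for the labelled three-qudit graph state with z = (0, 2s, s) on the triangle-type graph of Fig. 3, the partial trace over any two of the three qudits does not depend on s ∈ ℤ/d. -/
open Matrix Complex

/-- The adjacency matrix of the (2,3) CC graph: vertex `0` joined to vertices `1` and `2`
by weight-1 edges, vertices `1` and `2` not joined. -/
def A23 (d : ℕ) : Fin 3 → Fin 3 → ZMod d :=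
  fun i j => !![0, 1, 1; 1, 0, 0; 1, 0, 0] i j

/-- The (2,3) CC scheme state `|G_s⟩ = Z_2^{2s} Z_3^{s} |G⟩` encoding the secret `s`. -/
noncomputable def ccState (d : ℕ) [NeZero d] (s : ZMod d) : (Fin 3 → ZMod d) → ℂ :=
  Zmat ![0, 2 * s, s] *ᵥ graphVec (A23 d)

/-- The reduced density matrix of player `i`, i.e. the partial trace of `|G_s⟩⟨G_s|`
over the other two qudits. -/
noncomputable def reducedDensity (d : ℕ) [NeZero d] (s : ZMod d) (i : Fin 3) :
    Matrix (ZMod d) (ZMod d) ℂ :=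
  Matrix.of fun a b => ∑ x : Fin 3 → ZMod d,
    if x i = a then ccState d s x * (starRingEnd ℂ) (ccState d s (Function.update x i b))
    else 0

/-!
The amplitude of `|G_s⟩` at `x` is `d^{-3/2} ψ(Q x)`, where `ψ` is the standard additive character
of `ℤ/d` and `Q x = Σ_i z_i x_i + Σ_{i<j} A_{ij} x_i x_j` is the phase of the labelled graph state.
So the `(a, b)` entry of player `i`'s reduced state is `d^{-3} Σ_{x_i = a} ψ(Q x - Q x[i ↦ b])`.
Every vertex `i` has a neighbour `j` joined to it by a weight-1 edge, and shifting `x_j` by one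
multiplies each term by `ψ(a - b)`, which is `≠ 1` for `a ≠ b`: the off-diagonal entries vanish.
The diagonal terms are all `1`, so every reduced state is the maximally mixed state `I / d`.
-/

open ZMod (stdAddChar)

lemma AddChar.map_sum_eq_prod {ι A M : Type*} [AddCommMonoid A] [CommMonoid M] (ψ : AddChar A M)
    (s : Finset ι) (f : ι → A) : ψ (∑ i ∈ s, f i) = ∏ i ∈ s, ψ (f i) := by
  induction s using Finset.cons_induction with
  | empty => simp
  | cons i s hi ih => rw [Finset.sum_cons, Finset.prod_cons, ψ.map_add_eq_mul, ih]

theorem Fintype.sum_eq_zero_of_map_add_eq_mul {G R : Type*} [AddGroup G] [Fintype G] [Ring R]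
    [NoZeroDivisors R] {f : G → R} {g : G} {c : R} (hc : c ≠ 1)
    (hf : ∀ x, f (x + g) = c * f x) :
    ∑ x, f x = 0 := by
  have h : ∑ x, f x = c * ∑ x, f x := by
    rw [Finset.mul_sum, ← Equiv.sum_comp (Equiv.addRight g)]
    exact Fintype.sum_congr _ _ hf
  have : (1 - c) * ∑ x, f x = 0 := by rw [sub_mul, one_mul, ← h, sub_self]
  exact (mul_eq_zero.mp this).resolve_left (sub_ne_zero.mpr hc.symm)

lemma omega_pow {d : ℕ} [NeZero d] (k : ℕ) : ω d ^ k = stdAddChar (k : ZMod d) := by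
  rw [ZMod.stdAddChar_apply, ZMod.toCircle_natCast, ω, ← Complex.exp_nat_mul]
  ring_nf

section Phase
variable {n d : ℕ}

def labelledGraphPhase (A : Fin n → Fin n → ZMod d) (z x : Fin n → ZMod d) : ZMod d :=
  ∑ i, z i * x i + ∑ p ∈ Finset.univ.filter (fun p : Fin n × Fin n => p.1 < p.2),
    A p.1 p.2 * (x p.1 * x p.2)

lemma Zmat_mulVec_graphVec [NeZero d] (A : Fin n → Fin n → ZMod d) (z x : Fin n → ZMod d) :
    (Zmat z *ᵥ graphVec A) x =
      ((Real.sqrt d : ℝ) : ℂ)⁻¹ ^ n * stdAddChar (labelledGraphPhase A z x) := by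
  simp only [Zmat, mulVec_diagonal, graphVec, labelledGraphPhase, AddChar.map_add_eq_mul,
    AddChar.map_sum_eq_prod, omega_pow, Nat.cast_mul, ZMod.natCast_zmod_val]
  ring

lemma labelledGraphPhase_A23 (z x : Fin 3 → ZMod d) :
    labelledGraphPhase (A23 d) z x =
      z 0 * x 0 + z 1 * x 1 + z 2 * x 2 + x 0 * x 1 + x 0 * x 2 := by
  simp [labelledGraphPhase, A23, Finset.sum_filter, Fintype.sum_prod_type, Fin.sum_univ_three]
  ring

lemma labelledGraphPhase_A23_sub_update_add_single (z : Fin 3 → ZMod d) (i : Fin 3) :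
    ∃ j ≠ i, ∀ (b : ZMod d) (x : Fin 3 → ZMod d),
      labelledGraphPhase (A23 d) z (x + Pi.single j 1) -
          labelledGraphPhase (A23 d) z (Function.update (x + Pi.single j 1) i b) =
        labelledGraphPhase (A23 d) z x - labelledGraphPhase (A23 d) z (Function.update x i b) +
          (x i - b) := by
  refine ⟨if i = 0 then 1 else 0, by fin_cases i <;> decide, fun b x => ?_⟩
  fin_cases i <;> simp [labelledGraphPhase_A23] <;> ring

end Phase

section ReducedDensity
variable {d : ℕ} [NeZero d]

local notation "Q" s => labelledGraphPhase (A23 _) ![0, 2 * s, s]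

lemma ccState_mul_conj (s : ZMod d) (x y : Fin 3 → ZMod d) :
    ccState d s x * starRingEnd ℂ (ccState d s y) =
      ((d : ℂ) ^ 3)⁻¹ * stdAddChar ((Q s) x - (Q s) y) := by
  have hnorm : (((Real.sqrt d : ℝ) : ℂ) ^ 3)⁻¹ * (((Real.sqrt d : ℝ) : ℂ) ^ 3)⁻¹ =
      ((d : ℂ) ^ 3)⁻¹ := by
    rw [← mul_inv, ← mul_pow, ← Complex.ofReal_mul, Real.mul_self_sqrt (Nat.cast_nonneg d),
      Complex.ofReal_natCast]
  rw [ccState, Zmat_mulVec_graphVec, Zmat_mulVec_graphVec, map_mul, ← AddChar.map_neg_eq_conj,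
    sub_eq_add_neg, AddChar.map_add_eq_mul, map_pow, map_inv₀, Complex.conj_ofReal, inv_pow,
    ← hnorm]
  ring

lemma reducedDensity_apply (s : ZMod d) (i : Fin 3) (a b : ZMod d) :
    reducedDensity d s i a b = ((d : ℂ) ^ 3)⁻¹ *
      ∑ x, if x i = a then stdAddChar ((Q s) x - (Q s) (Function.update x i b)) else 0 := by
  simp only [reducedDensity, Matrix.of_apply, ccState_mul_conj, Finset.mul_sum, mul_ite, mul_zero]

lemma reducedDensity_apply_of_ne (s : ZMod d) (i : Fin 3) {a b : ZMod d} (hab : a ≠ b) :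
    reducedDensity d s i a b = 0 := by
  obtain ⟨j, hji, hshift⟩ := labelledGraphPhase_A23_sub_update_add_single ![0, 2 * s, s] i
  have hc : stdAddChar (a - b) ≠ 1 := by
    rw [← AddChar.map_zero_eq_one (stdAddChar : AddChar (ZMod d) ℂ),
      ZMod.injective_stdAddChar.ne_iff]
    exact sub_ne_zero.mpr hab
  rw [reducedDensity_apply,
    Fintype.sum_eq_zero_of_map_add_eq_mul hc (g := (Pi.single j 1 : Fin 3 → ZMod d)), mul_zero]
  intro x
  have hxi : (x + Pi.single j 1 : Fin 3 → ZMod d) i = x i := by simp [hji.symm]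
  rw [hxi, hshift]
  split_ifs with h
  · rw [h, AddChar.map_add_eq_mul, mul_comm]
  · rw [mul_zero]

lemma reducedDensity_apply_self (s : ZMod d) (i : Fin 3) (a : ZMod d) :
    reducedDensity d s i a a = (d : ℂ)⁻¹ := by
  have hcard : (Finset.univ.filter fun x : Fin 3 → ZMod d => x i = a).card = d ^ 2 := by
    simpa [ZMod.card] using Fintype.card_filter_piFinset_const (Finset.univ : Finset (ZMod d)) i a
  have hsummand : ∀ x : Fin 3 → ZMod d,
      (if x i = a then stdAddChar ((Q s) x - (Q s) (Function.update x i a)) else 0) =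
        if x i = a then 1 else 0 := by
    intro x
    split_ifs with h
    · rw [← h, Function.update_eq_self, sub_self, AddChar.map_zero_eq_one]
    · rfl
  rw [reducedDensity_apply, Fintype.sum_congr _ _ hsummand, Finset.sum_boole, hcard, Nat.cast_pow]
  have hd : (d : ℂ) ≠ 0 := Nat.cast_ne_zero.mpr (NeZero.ne d)
  field_simp

lemma reducedDensity_eq_smul_one (s : ZMod d) (i : Fin 3) :
    reducedDensity d s i = (d : ℂ)⁻¹ • 1 := by
  ext a b
  rcases eq_or_ne a b with rfl | hab
  · simp [reducedDensity_apply_self]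
  · simp [reducedDensity_apply_of_ne s i hab, hab]

end ReducedDensity

theorem cc23_single_player_independent_general (d : ℕ) [NeZero d] :
    ∀ s s' : ZMod d, ∀ i : Fin 3,
      reducedDensity d s i = reducedDensity d s' i := by
  intro s s' i
  rw [reducedDensity_eq_smul_one, reducedDensity_eq_smul_one]

/-- in the (2,3) CC scheme, each single player's reduced density matrix
(the partial trace over the other two qudits) is independent of the secret `s`. -/
theorem cc23_single_player_independent (d : ℕ) [NeZero d] (hd : d.Prime) :
    ∀ s s' : ZMod d, ∀ i : Fin 3,
      reducedDensity d s i = reducedDensity d s' i :=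
  cc23_single_player_independent_general d
end
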